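/- arXiv:1205.0882 — 6 statements merged into one kernel-verified Lean document; each statement's English description precedes it below -/
import Mathlib

section
/- Suppose N is a strictly lower triangular ν×ν real matrix and G : V → V is any map from a vector space V to itself, and the stage vector F ∈ V^ν satisfies the componentwise relation Q(F^{(i)}) = −Σ_j N_{ij} G(F^{(j)}) where Q is injective only at equilibrium in the sense that Q(g) = 0 implies g = M(g), and additionally G(g) = 0 whenever Q(g) = 0. Then Q(F^{(i)}) = 0 for all i, i.e., every stage is at equilibrium F^{(i)} = M(F^{(i)}). -/
/-- if `Q(F⁽ⁱ⁾) = -∑_j N_{ij} G(F⁽ʲ⁾)` with `N` strictly lower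
triangular, `Q g = 0 → g = M g` and `Q g = 0 → G g = 0`, then every stage is at
equilibrium: `Q(F⁽ⁱ⁾) = 0` and `F⁽ⁱ⁾ = M(F⁽ⁱ⁾)` for all `i`. -/
theorem stmt4 {V : Type*} [AddCommGroup V] [Module ℝ V] {ν : ℕ}
    (Q G M : V → V)
    (hQM : ∀ g, Q g = 0 → g = M g)
    (hQG : ∀ g, Q g = 0 → G g = 0)
    (N : Matrix (Fin ν) (Fin ν) ℝ)
    (hN : ∀ i j, i ≤ j → N i j = 0)
    (F : Fin ν → V)
    (hF : ∀ i, Q (F i) = -∑ j, N i j • G (F j)) :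
    ∀ i, Q (F i) = 0 ∧ F i = M (F i) := by
  have key : ∀ n : ℕ, ∀ i : Fin ν, i.val = n → Q (F i) = 0 := by
    intro n
    induction n using Nat.strong_induction_on with
    | _ n ih =>
      intro i hi
      rw [hF i, neg_eq_zero]
      apply Finset.sum_eq_zero
      intro j _
      rcases lt_or_ge j i with h | h
      · rw [hQG _ (ih j.val (hi ▸ h) j rfl), smul_zero]
      · rw [hN i j h, zero_smul]
  exact fun i => ⟨key i.val i rfl, hQM _ (key i.val i rfl)⟩
end

section
/- Sufficient conditions for nonnegativity of the DIRK relaxation scheme: if (I + zA)^{-1} e ≥ 0, (I + zA)^{-1} A e ≥ 0 (componentwise), 1 − w^T A^{-1} e ≥ 0 and w^T A^{-1} ≥ 0 (componentwise), then f^n ≥ 0 and M ≥ 0 imply f^{n+1} ≥ 0, where F = (I + zA)^{-1}(f^n e + zAMe) and f^{n+1} = (1 − w^T A^{-1} e) f^n + w^T A^{-1} F. -/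
open Matrix

/-- sufficient monotonicity conditions
`(I+zA)⁻¹e ≥ 0`, `(I+zA)⁻¹Ae ≥ 0`, `1 - wᵀA⁻¹e ≥ 0`, `wᵀA⁻¹ ≥ 0` guarantee
nonnegativity of `fⁿ⁺¹` for the DIRK relaxation scheme. -/
theorem stmt8 {ν : ℕ} (A : Matrix (Fin ν) (Fin ν) ℝ) (hA : IsUnit A.det)
    (z : ℝ) (hz : 0 < z) (hinv : IsUnit (1 + z • A).det)
    (w e : Fin ν → ℝ) (he : e = fun _ => 1)
    (h1 : ∀ i, 0 ≤ ((1 + z • A)⁻¹ *ᵥ e) i)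
    (h2 : ∀ i, 0 ≤ ((1 + z • A)⁻¹ *ᵥ (A *ᵥ e)) i)
    (h3 : 0 ≤ 1 - (w ᵥ* A⁻¹) ⬝ᵥ e)
    (h4 : ∀ i, 0 ≤ (w ᵥ* A⁻¹) i)
    (fn M : ℝ) (hf : 0 ≤ fn) (hM : 0 ≤ M)
    (F : Fin ν → ℝ)
    (hF : F = (1 + z • A)⁻¹ *ᵥ (fn • e + (z * M) • (A *ᵥ e))) :
    0 ≤ (1 - (w ᵥ* A⁻¹) ⬝ᵥ e) * fn + (w ᵥ* A⁻¹) ⬝ᵥ F := by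
  have hFnn : ∀ i, 0 ≤ F i := by
    intro i
    have : F = fn • ((1 + z • A)⁻¹ *ᵥ e) + (z * M) • ((1 + z • A)⁻¹ *ᵥ (A *ᵥ e)) := by
      rw [hF, mulVec_add, mulVec_smul, mulVec_smul]
    rw [this]
    have := h1 i
    have := h2 i
    simp only [Pi.add_apply, Pi.smul_apply, smul_eq_mul]
    have hzM : 0 ≤ z * M := mul_nonneg hz.le hM
    positivity
  have hdot : 0 ≤ (w ᵥ* A⁻¹) ⬝ᵥ F :=
    Finset.sum_nonneg fun i _ => mul_nonneg (h4 i) (hFnn i)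
  have := mul_nonneg h3 hf
  linarith
end

section
/- For the penalized homogeneous scheme, if the componentwise conditions (I+zA)^{-1}e ≥ 0, (I+zA)^{-1}(A−Ã)e ≥ 0, (I+zA)^{-1}Ã ≥ 0, 1 − w^T A^{-1} e ≥ 0, w^T A^{-1} ≥ 0 hold and w̃^T = w^T A^{-1} Ã, then nonnegativity of f^n, M and P(F)/μ (componentwise) implies f^{n+1} ≥ 0, where F = (I+zA)^{-1}(f^n e + z(A−Ã)Me + zÃ P(F)/μ) and f^{n+1} = (1 − w^T A^{-1} e) f^n + w^T A^{-1} F + z(w̃^T − w^T A^{-1} Ã)(P(F)/μ − Me). -/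
open Matrix

/-- monotonicity conditions for the penalized homogeneous scheme:
componentwise nonnegativity of `(I+zA)⁻¹e`, `(I+zA)⁻¹(A-Ã)e`, `(I+zA)⁻¹Ã`,
`1 - wᵀA⁻¹e ≥ 0`, `wᵀA⁻¹ ≥ 0` and `w̃ᵀ = wᵀA⁻¹Ã` imply `fⁿ⁺¹ ≥ 0`
whenever `fⁿ, M` and `P(F)/μ` are nonnegative. -/
theorem stmt11 {ν : ℕ} (A At : Matrix (Fin ν) (Fin ν) ℝ) (hA : IsUnit A.det)
    (z : ℝ) (hz : 0 < z) (hinv : IsUnit (1 + z • A).det)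
    (w wt e : Fin ν → ℝ) (he : e = fun _ => 1)
    (h1 : ∀ i, 0 ≤ ((1 + z • A)⁻¹ *ᵥ e) i)
    (h2 : ∀ i, 0 ≤ ((1 + z • A)⁻¹ *ᵥ ((A - At) *ᵥ e)) i)
    (h3 : ∀ i j, 0 ≤ ((1 + z • A)⁻¹ * At) i j)
    (h4 : 0 ≤ 1 - (w ᵥ* A⁻¹) ⬝ᵥ e)
    (h5 : ∀ i, 0 ≤ (w ᵥ* A⁻¹) i)
    (h6 : wt = w ᵥ* A⁻¹ ᵥ* At)
    (fn M : ℝ) (hf : 0 ≤ fn) (hM : 0 ≤ M)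
    (P : Fin ν → ℝ) (hP : ∀ i, 0 ≤ P i)
    (F : Fin ν → ℝ)
    (hF : F = (1 + z • A)⁻¹ *ᵥ (fn • e + (z * M) • ((A - At) *ᵥ e) + z • (At *ᵥ P))) :
    0 ≤ (1 - (w ᵥ* A⁻¹) ⬝ᵥ e) * fn + (w ᵥ* A⁻¹) ⬝ᵥ F
        + z * ((wt - w ᵥ* A⁻¹ ᵥ* At) ⬝ᵥ (P - M • e)) := by
  have hF0 : ∀ i, 0 ≤ F i := by
    intro i
    rw [hF]
    rw [mulVec_add, mulVec_add, mulVec_smul, mulVec_smul, mulVec_smul]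
    simp only [Pi.add_apply, Pi.smul_apply, smul_eq_mul]
    have h3' : 0 ≤ ((1 + z • A)⁻¹ *ᵥ At *ᵥ P) i := by
      rw [mulVec_mulVec]
      show 0 ≤ ((1 + z • A)⁻¹ * At) i ⬝ᵥ P
      exact Finset.sum_nonneg fun j _ => mul_nonneg (h3 i j) (hP j)
    have t1 := mul_nonneg hf (h1 i)
    have t2 := mul_nonneg (mul_nonneg hz.le hM) (h2 i)
    have t3 := mul_nonneg hz.le h3'
    linarith
  have hdot : 0 ≤ (w ᵥ* A⁻¹) ⬝ᵥ F :=
    Finset.sum_nonneg fun j _ => mul_nonneg (h5 j) (hF0 j)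
  have hz2 : (wt - w ᵥ* A⁻¹ ᵥ* At) = 0 := by rw [h6]; simp
  rw [hz2]
  simp only [zero_dotProduct, mul_zero, add_zero]
  have := mul_nonneg h4 hf
  linarith
end

section
/- Verification for scheme DP-A(1,2,1): with implicit tableau A = [[γ,0],[1−γ,γ]], w = (1−γ,γ), for γ ≥ 1/2 the scheme is globally stiffly accurate (last row of A equals w), and the absolute monotonicity conditions (I+zA)^{-1}e ≥ 0 and (I+zA)^{-1}Ae ≥ 0 hold componentwise for all z ≥ 0. -/
open Matrix

/-- for scheme DP-A(1,2,1) with `γ ≥ 1/2` the implicit tableau is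
globally stiffly accurate (last row of `A` equals `w`) and the absolute
monotonicity conditions hold for all `z ≥ 0`. -/
theorem stmt12 (γ : ℝ) (hγ : 1/2 ≤ γ)
    (A : Matrix (Fin 2) (Fin 2) ℝ) (hA : A = !![γ, 0; 1 - γ, γ])
    (w : Fin 2 → ℝ) (hw : w = ![1 - γ, γ])
    (e : Fin 2 → ℝ) (he : e = fun _ => 1) :
    (∀ i, A 1 i = w i) ∧
    (∀ z : ℝ, 0 ≤ z →
      (∀ i, 0 ≤ ((1 + z • A)⁻¹ *ᵥ e) i) ∧
      (∀ i, 0 ≤ ((1 + z • A)⁻¹ *ᵥ (A *ᵥ e)) i)) := by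
  subst hA hw he
  have hγ0 : (0:ℝ) ≤ γ := le_trans (by norm_num) hγ
  refine ⟨fun i => by fin_cases i <;> simp, ?_⟩
  intro z hz
  have hd : (0:ℝ) < 1 + z * γ := by positivity
  have hd' : (1:ℝ) + z * γ ≠ 0 := ne_of_gt hd
  have hM : (1 + z • !![γ, 0; 1 - γ, γ]) = !![1 + z*γ, 0; z*(1-γ), 1 + z*γ] := by
    ext i j
    fin_cases i <;> fin_cases j <;>
      simp [Matrix.one_apply] <;> ring
  have hinv : (1 + z • !![γ, 0; 1 - γ, γ])⁻¹ =
      !![(1 + z*γ)⁻¹, 0; -(z*(1-γ))/(1+z*γ)^2, (1 + z*γ)⁻¹] := by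
    rw [hM]
    apply Matrix.inv_eq_right_inv
    ext i j
    fin_cases i <;> fin_cases j <;>
      simp [Matrix.mul_apply, Fin.sum_univ_two, Matrix.one_apply] <;>
      field_simp <;> ring
  rw [hinv]
  have key1 : -(z*(1-γ))/(1+z*γ)^2 + (1+z*γ)⁻¹ = (1+z*(2*γ-1))/(1+z*γ)^2 := by
    field_simp
    ring
  have key2 : -(z*(1-γ))/(1+z*γ)^2 * γ + (1+z*γ)⁻¹ = (1+z*γ^2)/(1+z*γ)^2 := by
    field_simp
    ring
  constructor
  · intro i
    fin_cases i <;>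
      simp [Matrix.mulVec, dotProduct, Fin.sum_univ_two]
    · positivity
    · rw [key1]
      apply div_nonneg _ (by positivity)
      nlinarith
  · intro i
    have hAe : (!![γ, 0; 1 - γ, γ] *ᵥ fun _ => 1) = ![γ, 1] := by
      ext i
      fin_cases i <;>
        simp [Matrix.mulVec, dotProduct, Fin.sum_univ_two] <;> ring
    rw [hAe]
    fin_cases i <;>
      simp [Matrix.mulVec, dotProduct, Fin.sum_univ_two]
    · positivity
    · rw [key2]
      positivity
end

section
/- For the DP2-A(2,4,2) scheme with γ > (2+√2)/2, the absolute monotonicity conditions (I+zA)^{-1}e ≥ 0, (I+zA)^{-1}(A−Ã)e ≥ 0 and (I+zA)^{-1}Ã ≥ 0 hold componentwise for all z ≥ (2γ² − 4γ + 1)^{-1}; note that 2γ² − 4γ + 1 > 0 for γ > (2+√2)/2. -/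
open Matrix

set_option maxHeartbeats 1600000 in
private lemma stmt17_aux (γ z t w : ℝ) (ht : t = 1 + z*γ) (ht0 : t ≠ 0)
    (hw : w = z*(2*γ^2-4*γ+1) - 1) :
    !![t,0,0,0; -(z*γ),t,0,0; 0,z*(1-γ),t,0; 0,z/2,z*(1/2-γ),t] *
    !![1/t,0,0,0;
       z*γ/t^2, 1/t, 0, 0;
       z^2*γ*(γ-1)/t^3, z*(γ-1)/t^2, 1/t, 0;
       z^2*γ*w/(2*t^4), z*w/(2*t^3), z*(γ-1/2)/t^2, 1/t] = 1 := by
  subst ht hw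
  ext i j
  fin_cases i <;> fin_cases j <;>
    simp [Matrix.mul_apply, Fin.sum_univ_four, Matrix.one_apply] <;>
    field_simp <;> ring

set_option maxHeartbeats 1600000 in
/-- for scheme DP2-A(2,4,2) with `γ > (2+√2)/2`, the absolute
monotonicity conditions `(I+zA)⁻¹e ≥ 0`, `(I+zA)⁻¹(A-Ã)e ≥ 0`, `(I+zA)⁻¹Ã ≥ 0`
hold componentwise for all `z ≥ (2γ² - 4γ + 1)⁻¹`; moreover
`2γ² - 4γ + 1 > 0 ↔ γ > (2+√2)/2 ∨ γ < (2-√2)/2`. -/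
theorem stmt17 (γ : ℝ) (hγ : (2 + Real.sqrt 2)/2 < γ)
    (A At : Matrix (Fin 4) (Fin 4) ℝ)
    (hA : A = !![γ,0,0,0; -γ,γ,0,0; 0,1-γ,γ,0; 0,1/2,1/2-γ,γ])
    (hAt : At = !![0,0,0,0; 0,0,0,0; 0,1,0,0; 0,1/2,1/2,0])
    (e : Fin 4 → ℝ) (he : e = fun _ => 1)
    (z : ℝ) (hz : 1/(2*γ^2 - 4*γ + 1) ≤ z) :
    (∀ γ' : ℝ, 0 < 2*γ'^2 - 4*γ' + 1 ↔
      ((2 + Real.sqrt 2)/2 < γ' ∨ γ' < (2 - Real.sqrt 2)/2)) ∧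
    (∀ i, 0 ≤ ((1 + z • A)⁻¹ *ᵥ e) i) ∧
    (∀ i, 0 ≤ ((1 + z • A)⁻¹ *ᵥ ((A - At) *ᵥ e)) i) ∧
    (∀ i j, 0 ≤ ((1 + z • A)⁻¹ * At) i j) := by
  have hs2 : Real.sqrt 2 * Real.sqrt 2 = 2 := Real.mul_self_sqrt (by norm_num)
  have hsnn : (0:ℝ) ≤ Real.sqrt 2 := Real.sqrt_nonneg 2
  have hiff : ∀ γ' : ℝ, 0 < 2*γ'^2 - 4*γ' + 1 ↔
      ((2 + Real.sqrt 2)/2 < γ' ∨ γ' < (2 - Real.sqrt 2)/2) := by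
    intro γ'
    constructor
    · intro h
      by_contra hc
      push_neg at hc
      obtain ⟨h1, h2⟩ := hc
      nlinarith [mul_nonneg (sub_nonneg.mpr h1) (sub_nonneg.mpr h2)]
    · rintro (h | h)
      · nlinarith [sq_nonneg (γ' - 1 - Real.sqrt 2 / 2)]
      · nlinarith [sq_nonneg (γ' - 1 + Real.sqrt 2 / 2)]
  have hQ : 0 < 2*γ^2 - 4*γ + 1 := (hiff γ).mpr (Or.inl hγ)
  have hγ1 : (0:ℝ) ≤ γ - 1 := by nlinarith
  have hγ2 : (0:ℝ) ≤ γ - 1/2 := by nlinarith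
  have hγ2' : (0:ℝ) ≤ γ - 2⁻¹ := by nlinarith
  have hγ0 : (0:ℝ) < γ := by nlinarith
  have hz0 : (0:ℝ) < z := lt_of_lt_of_le (by positivity) hz
  have hw0 : (0:ℝ) ≤ z*(2*γ^2-4*γ+1) - 1 := by
    have := (div_le_iff₀ hQ).mp hz
    linarith
  obtain ⟨w, hw, hwdef⟩ : ∃ w : ℝ, 0 ≤ w ∧ w = z*(2*γ^2-4*γ+1) - 1 := ⟨_, hw0, rfl⟩
  obtain ⟨t, ht0, htdef⟩ : ∃ t : ℝ, 0 < t ∧ t = 1 + z*γ := ⟨_, by positivity, rfl⟩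
  have ht0' : t ≠ 0 := ne_of_gt ht0
  set B : Matrix (Fin 4) (Fin 4) ℝ :=
    !![1/t,0,0,0;
       z*γ/t^2, 1/t, 0, 0;
       z^2*γ*(γ-1)/t^3, z*(γ-1)/t^2, 1/t, 0;
       z^2*γ*w/(2*t^4), z*w/(2*t^3), z*(γ-1/2)/t^2, 1/t] with hB
  have hM : (1 + z • A) =
      !![t,0,0,0; -(z*γ),t,0,0; 0,z*(1-γ),t,0; 0,z/2,z*(1/2-γ),t] := by
    subst hA htdef
    ext i j
    fin_cases i <;> fin_cases j <;>
      simp [Matrix.add_apply, Matrix.smul_apply, Matrix.one_apply] <;> ring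
  have hinv : (1 + z • A)⁻¹ = B := by
    apply Matrix.inv_eq_right_inv
    rw [hM, hB]
    exact stmt17_aux γ z t w htdef ht0' hwdef
  refine ⟨hiff, ?_, ?_, ?_⟩
  · rw [hinv, he]
    intro i
    fin_cases i <;>
      simp [hB, Matrix.mulVec, dotProduct, Fin.sum_univ_four] <;> positivity
  · have hv : (A - At) *ᵥ e = ![γ, 0, 0, 0] := by
      subst hA hAt he
      funext i
      fin_cases i <;>
        simp [Matrix.mulVec, dotProduct, Fin.sum_univ_four, Matrix.sub_apply] <;> ring
    rw [hinv, hv]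
    intro i
    fin_cases i <;>
      simp [hB, Matrix.mulVec, dotProduct, Fin.sum_univ_four] <;> positivity
  · rw [hinv, hAt]
    intro i j
    fin_cases i <;> fin_cases j <;>
      simp [hB, Matrix.mul_apply, Fin.sum_univ_four] <;> positivity
end

section
/- For a non-GSA CK-type IMEX scheme, the numerical update can be written as f^{n+1} = f^n(1 − ŵ^T Â^{-1} ê) + Δt(w̃₁ − ŵ^T Â^{-1} ã) L(f^n) + Δt(ŵ̃^T − ŵ^T Â^{-1} Ẫ) L(F̂) + ŵ^T Â^{-1} F̂ + (Δt/ε)(w₁ − ŵ^T Â^{-1} a) Q(f^n); hence the update is independent of ε whenever w₁ = ŵ^T Â^{-1} a. -/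
open Matrix

/-- for a non-GSA CK-type IMEX scheme the update can be written as
`fⁿ⁺¹ = fⁿ(1 - ŵᵀÂ⁻¹ê) + Δt(w̃₁ - ŵᵀÂ⁻¹ã) L(fⁿ) + Δt(ŵ̃ᵀ - ŵᵀÂ⁻¹Ẫ) L(F̂)
 + ŵᵀÂ⁻¹F̂ + (Δt/ε)(w₁ - ŵᵀÂ⁻¹a) Q(fⁿ)`; in particular it is independent of `ε`
whenever `w₁ = ŵᵀÂ⁻¹a`. -/
theorem stmt19 {V : Type*} [AddCommGroup V] [Module ℝ V] {n : ℕ}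
    (Ah B Ath : Matrix (Fin n) (Fin n) ℝ)
    (hAB : Ah * B = 1) (hBA : B * Ah = 1)
    (a at' wh wth : Fin n → ℝ) (w1 wt1 : ℝ)
    (Δt ε : ℝ) (hΔt : 0 < Δt) (hε : 0 < ε)
    (fn Lfn Qfn : V) (Fh LFh QFh : Fin n → V)
    (hstage : ∀ i, Fh i = fn + Δt • at' i • Lfn + Δt • ∑ j, Ath i j • LFh j
        + (Δt/ε) • (a i • Qfn + ∑ j, Ah i j • QFh j))
    (fn1 : V)
    (hupd : fn1 = fn + Δt • wt1 • Lfn + Δt • ∑ i, wth i • LFh i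
        + (Δt/ε) • (w1 • Qfn + ∑ i, wh i • QFh i)) :
    (fn1 = (1 - ∑ j, (wh ᵥ* B) j) • fn
      + (Δt * (wt1 - (wh ᵥ* B) ⬝ᵥ at')) • Lfn
      + Δt • ∑ j, (wth j - (wh ᵥ* B ᵥ* Ath) j) • LFh j
      + ∑ j, (wh ᵥ* B) j • Fh j
      + ((Δt/ε) * (w1 - (wh ᵥ* B) ⬝ᵥ a)) • Qfn) ∧
    (w1 = (wh ᵥ* B) ⬝ᵥ a →
      fn1 = (1 - ∑ j, (wh ᵥ* B) j) • fn
      + (Δt * (wt1 - (wh ᵥ* B) ⬝ᵥ at')) • Lfn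
      + Δt • ∑ j, (wth j - (wh ᵥ* B ᵥ* Ath) j) • LFh j
      + ∑ j, (wh ᵥ* B) j • Fh j) := by
  have hcAh : wh ᵥ* B ᵥ* Ah = wh := by
    rw [vecMul_vecMul, hBA, vecMul_one]
  have h2 : ∀ k, (∑ j, (∑ i, wh i * B i j) * Ah j k) = wh k := by
    intro k
    have := congrFun hcAh k
    simpa [vecMul, dotProduct] using this
  have key : ∑ j, (wh ᵥ* B) j • Fh j = (∑ j, (wh ᵥ* B) j) • fn
      + (Δt * ((wh ᵥ* B) ⬝ᵥ at')) • Lfn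
      + Δt • ∑ k, (wh ᵥ* B ᵥ* Ath) k • LFh k
      + (Δt/ε) • (((wh ᵥ* B) ⬝ᵥ a) • Qfn + ∑ k, wh k • QFh k) := by
    simp only [hstage, smul_add, Finset.sum_add_distrib, Finset.smul_sum, smul_smul,
      Finset.sum_smul, vecMul, dotProduct]
    congr 1
    · congr 1
      · congr 1
        rw [← Finset.sum_smul]
        congr 1
        rw [Finset.mul_sum]
        exact Finset.sum_congr rfl fun x _ => by ring
      · rw [Finset.sum_comm]
        exact Finset.sum_congr rfl fun x _ => Finset.sum_congr rfl fun y _ => by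
          congr 1; ring
    · congr 1
      · exact Finset.sum_congr rfl fun x _ => by congr 1; ring
      · rw [Finset.sum_comm]
        refine Finset.sum_congr rfl fun k _ => ?_
        rw [← Finset.sum_smul]
        congr 1
        rw [← h2 k, Finset.mul_sum]
        exact Finset.sum_congr rfl fun x _ => by ring
  have main : fn1 = (1 - ∑ j, (wh ᵥ* B) j) • fn
      + (Δt * (wt1 - (wh ᵥ* B) ⬝ᵥ at')) • Lfn
      + Δt • ∑ j, (wth j - (wh ᵥ* B ᵥ* Ath) j) • LFh j
      + ∑ j, (wh ᵥ* B) j • Fh j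
      + ((Δt/ε) * (w1 - (wh ᵥ* B) ⬝ᵥ a)) • Qfn := by
    rw [hupd, key]
    simp only [sub_smul, Finset.sum_sub_distrib]
    module
  refine ⟨main, fun hw => ?_⟩
  rw [main, hw]
  simp
end
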